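/- arXiv:2405.07824 — 3 statements merged into one kernel-verified Lean document; each statement's English description precedes it below -/
import Mathlib

section
/- The piecewise mapping T on [0,2] defined by Tx = x/4 for x in [0,1] and Tx = x/5 for x in (1,2] satisfies d(Tx,Ty) ≤ (1/4)·max(d(x,y), d(x,Ty), d(y,Tx)) for all x,y in [0,2], where d is the usual metric on the reals. -/
noncomputable def T0 (x : ℝ) : ℝ := if x ≤ 1 then x / 4 else x / 5

theorem stmt0 :
    ∀ x ∈ Set.Icc (0:ℝ) 2, ∀ y ∈ Set.Icc (0:ℝ) 2,
      dist (T0 x) (T0 y) ≤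
        (1/4) * max (dist x y) (max (dist x (T0 y)) (dist y (T0 x))) := by
  intro x hx y hy
  obtain ⟨hx0, hx2⟩ := hx
  obtain ⟨hy0, hy2⟩ := hy
  simp only [T0, Real.dist_eq]
  split_ifs with hx1 hy1 hy1
  · -- both ≤ 1 : use dist x y
    refine le_trans ?_ (mul_le_mul_of_nonneg_left (le_max_left _ _) (by norm_num))
    rcases abs_cases (x - y) with ⟨h, _⟩ | ⟨h, _⟩ <;>
      rcases abs_cases (x / 4 - y / 4) with ⟨h2, _⟩ | ⟨h2, _⟩ <;> linarith
  · -- x ≤ 1 < y : use dist y (T0 x) = |y - x/4|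
    refine le_trans ?_ (mul_le_mul_of_nonneg_left
      (le_trans (le_max_right _ _) (le_max_right _ _)) (by norm_num))
    rcases abs_cases (y - x / 4) with ⟨h, _⟩ | ⟨h, _⟩ <;>
      rcases abs_cases (x / 4 - y / 5) with ⟨h2, _⟩ | ⟨h2, _⟩ <;> linarith
  · -- y ≤ 1 < x : use dist x (T0 y) = |x - y/4|
    refine le_trans ?_ (mul_le_mul_of_nonneg_left
      (le_trans (le_max_left _ _) (le_max_right _ _)) (by norm_num))
    rcases abs_cases (x - y / 4) with ⟨h, _⟩ | ⟨h, _⟩ <;>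
      rcases abs_cases (x / 5 - y / 4) with ⟨h2, _⟩ | ⟨h2, _⟩ <;> linarith
  · -- both > 1 : use dist x y
    refine le_trans ?_ (mul_le_mul_of_nonneg_left (le_max_left _ _) (by norm_num))
    rcases abs_cases (x - y) with ⟨h, _⟩ | ⟨h, _⟩ <;>
      rcases abs_cases (x / 5 - y / 5) with ⟨h2, _⟩ | ⟨h2, _⟩ <;> linarith
end

section
/- Every Ćirić contraction on a complete metric space has a unique fixed point, and for any starting point x₀ the Picard iteration x_{n+1} = F x_n converges to this fixed point. -/
/-- `F` is a Ćirić contraction with constant `γ`. -/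
def IsCiric {X : Type*} [MetricSpace X] (F : X → X) (γ : ℝ) : Prop :=
  ∀ x y : X, dist (F x) (F y) ≤
    γ * max (dist x y) (max (dist x (F x)) (max (dist y (F y))
      ((dist x (F y) + dist y (F x)) / 2)))

private lemma ciric_step {X : Type*} [MetricSpace X] (F : X → X) (γ : ℝ)
    (hγ : γ ∈ Set.Ioo (0:ℝ) 1) (hF : IsCiric F γ) (x : X) :
    dist (F x) (F (F x)) ≤ γ * dist x (F x) := by
  obtain ⟨hγ0, hγ1⟩ := hγ
  have h := hF x (F x)
  set d0 := dist x (F x) with hd0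
  set d1 := dist (F x) (F (F x)) with hd1
  have h2 : d1 ≤ γ * max d0 d1 := by
    refine h.trans (mul_le_mul_of_nonneg_left ?_ hγ0.le)
    have ht := dist_triangle x (F x) (F (F x))
    have h0 : d0 ≤ max d0 d1 := le_max_left _ _
    have h1 : d1 ≤ max d0 d1 := le_max_right _ _
    refine max_le h0 (max_le h0 (max_le h1 ?_))
    rw [dist_self]
    linarith
  rcases le_total d1 d0 with hc | hc
  · calc d1 ≤ γ * max d0 d1 := h2
      _ = γ * d0 := by rw [max_eq_left hc]
  · have : d1 ≤ γ * d1 := by rwa [max_eq_right hc] at h2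
    have hd1nn : 0 ≤ d1 := dist_nonneg
    have hd0nn : 0 ≤ d0 := dist_nonneg
    have h4 : 0 < 1 - γ := by linarith
    have h5 : d1 ≤ 0 := by
      by_contra h'
      push_neg at h'
      nlinarith [mul_pos h4 h']
    have h6 : d1 = 0 := le_antisymm h5 hd1nn
    rw [h6]
    positivity

private lemma ciric_geom {X : Type*} [MetricSpace X] (F : X → X) (γ : ℝ)
    (hγ : γ ∈ Set.Ioo (0:ℝ) 1) (hF : IsCiric F γ) (x : X) (n : ℕ) :
    dist (F^[n] x) (F^[n+1] x) ≤ γ ^ n * dist x (F x) := by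
  induction n with
  | zero => simp
  | succ n ih =>
    have hstep := ciric_step F γ hγ hF (F^[n] x)
    rw [Function.iterate_succ_apply', Function.iterate_succ_apply',
      Function.iterate_succ_apply'] at *
    calc dist (F (F^[n] x)) (F (F (F^[n] x))) ≤ γ * dist (F^[n] x) (F (F^[n] x)) := hstep
      _ ≤ γ * (γ ^ n * dist x (F x)) := by
          exact mul_le_mul_of_nonneg_left ih hγ.1.le
      _ = γ ^ (n+1) * dist x (F x) := by ring

private lemma ciric_orbit {X : Type*} [MetricSpace X] [CompleteSpace X] (F : X → X) (γ : ℝ)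
    (hγ : γ ∈ Set.Ioo (0:ℝ) 1) (hF : IsCiric F γ) (x₀ : X) :
    ∃ q : X, F q = q ∧ Filter.Tendsto (fun n => F^[n] x₀) Filter.atTop (nhds q) := by
  have hcauchy : CauchySeq (fun n => F^[n] x₀) := by
    apply cauchySeq_of_le_geometric γ (dist x₀ (F x₀)) hγ.2
    intro n
    have := ciric_geom F γ hγ hF x₀ n
    simpa [mul_comm] using this
  obtain ⟨q, hq⟩ := cauchySeq_tendsto_of_complete hcauchy
  refine ⟨q, ?_, hq⟩
  set a : ℕ → X := fun n => F^[n] x₀ with ha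
  set D := dist q (F q) with hD
  have ha1 : Filter.Tendsto (fun n => a (n+1)) Filter.atTop (nhds q) :=
    hq.comp (Filter.tendsto_add_atTop_nat 1)
  -- limit of the bound
  have hM : Filter.Tendsto (fun n => γ * max (dist (a n) q) (max (dist (a n) (a (n+1)))
      (max D ((dist (a n) (F q) + dist q (a (n+1))) / 2)))) Filter.atTop
      (nhds (γ * max 0 (max 0 (max D ((D + 0) / 2))))) := by
    apply Filter.Tendsto.const_mul
    refine Filter.Tendsto.max ?_ (Filter.Tendsto.max ?_ (Filter.Tendsto.max tendsto_const_nhds ?_))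
    · have := hq.dist (tendsto_const_nhds : Filter.Tendsto (fun _ : ℕ => q) _ _)
      simpa using this
    · simpa using hq.dist ha1
    · have h1 := hq.dist (tendsto_const_nhds : Filter.Tendsto (fun _ : ℕ => F q) _ _)
      have h2 := (tendsto_const_nhds : Filter.Tendsto (fun _ : ℕ => q) _ _).dist ha1
      have := (h1.add h2).div_const 2
      simpa [hD] using this
  have hb : Filter.Tendsto (fun n => dist (a (n+1)) (F q)) Filter.atTop (nhds D) := by
    have := ha1.dist (tendsto_const_nhds : Filter.Tendsto (fun _ : ℕ => F q) _ _)
    simpa [dist_comm] using this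
  have hle : ∀ n, dist (a (n+1)) (F q) ≤ γ * max (dist (a n) q) (max (dist (a n) (a (n+1)))
      (max D ((dist (a n) (F q) + dist q (a (n+1))) / 2))) := by
    intro n
    have := hF (a n) q
    simpa [ha, Function.iterate_succ_apply', dist_comm] using this
  have hDle : D ≤ γ * max 0 (max 0 (max D ((D + 0) / 2))) :=
    le_of_tendsto_of_tendsto' hb hM hle
  have hDnn : 0 ≤ D := dist_nonneg
  have hmax : max 0 (max 0 (max D ((D + 0) / 2))) = D := by
    rw [add_zero]
    rw [max_eq_left (by linarith : D / 2 ≤ D)]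
    rw [max_eq_right hDnn, max_eq_right hDnn]
  rw [hmax] at hDle
  have hD0 : D = 0 := by nlinarith [hγ.1, hγ.2]
  have : dist (F q) q = 0 := by rw [dist_comm]; exact hD0
  exact dist_eq_zero.mp this

theorem stmt2 {X : Type*} [MetricSpace X] [CompleteSpace X] [Nonempty X]
    (F : X → X) (γ : ℝ) (hγ : γ ∈ Set.Ioo (0:ℝ) 1) (hF : IsCiric F γ) :
    ∃ p : X, F p = p ∧ (∀ q : X, F q = q → q = p) ∧
      ∀ x₀ : X, Filter.Tendsto (fun n => F^[n] x₀) Filter.atTop (nhds p) := by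
  obtain ⟨x⟩ := ‹Nonempty X›
  obtain ⟨p, hp, _⟩ := ciric_orbit F γ hγ hF x
  have huniq : ∀ q : X, F q = q → q = p := by
    intro q hq
    have h := hF q p
    rw [hq, hp] at h
    have hd : dist q p ≤ γ * dist q p := by
      have : max (dist q p) (max (dist q q) (max (dist p p) ((dist q p + dist p q) / 2)))
          = dist q p := by
        rw [dist_self, dist_self, dist_comm p q]
        have h1 : (dist q p + dist q p) / 2 = dist q p := by ring
        rw [h1, max_eq_right dist_nonneg, max_eq_right dist_nonneg, max_self]
      rwa [this] at h
    have := dist_nonneg (x := q) (y := p)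
    have : dist q p = 0 := by nlinarith [hγ.1, hγ.2]
    exact dist_eq_zero.mp this
  refine ⟨p, hp, huniq, fun x₀ => ?_⟩
  obtain ⟨q, hq, hconv⟩ := ciric_orbit F γ hγ hF x₀
  rwa [huniq q hq] at hconv
end

section
/- If F is a Ćirić contraction on a complete metric space with modulus σ and fixed point x*, then for every x, d(x*, x) ≤ γ · d(Fx, x), where γ = max( (2−σ)/(2−2σ), 1/(1−σ) ). -/
theorem stmt3 {X : Type*} [MetricSpace X] [CompleteSpace X]
    (F : X → X) (σ : ℝ) (hσ : σ ∈ Set.Ioo (0:ℝ) 1) (hF : IsCiric F σ)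
    (xstar : X) (hfix : F xstar = xstar) :
    ∀ x : X, dist xstar x ≤
      max ((2 - σ) / (2 - 2 * σ)) (1 / (1 - σ)) * dist (F x) x := by
  obtain ⟨hσ0, hσ1⟩ := hσ
  intro x
  have key := hF xstar x
  rw [hfix, dist_self, dist_comm x xstar] at key
  set a := dist xstar x with ha
  set b := dist x (F x) with hb
  set c := dist xstar (F x) with hc
  have hbb : dist (F x) x = b := dist_comm (F x) x
  rw [hbb]
  have htri : a ≤ c + b := by
    have := dist_triangle xstar (F x) x
    rw [hbb] at this; linarith
  set γ := max ((2 - σ) / (2 - 2 * σ)) (1 / (1 - σ)) with hγ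
  have hσ1' : (0:ℝ) < 1 - σ := by linarith
  have hg1 : 1 / (1 - σ) ≤ γ := le_max_right _ _
  have hg2 : (2 - σ) / (2 - 2 * σ) ≤ γ := le_max_left _ _
  have hg1' : 1 ≤ γ * (1 - σ) := by
    have h := hg1; rw [div_le_iff₀ hσ1'] at h; linarith
  have hg2' : 2 - σ ≤ γ * (2 - 2 * σ) := by
    rw [div_le_iff₀ (by linarith)] at hg2; linarith
  have hb0 : 0 ≤ b := dist_nonneg
  have hc0 : 0 ≤ c := dist_nonneg
  have hkey : c ≤ σ * max a (max 0 (max b ((c + a) / 2))) := key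
  rcases le_total a (max 0 (max b ((c + a) / 2))) with h | h
  · rw [max_eq_right h] at hkey
    rcases le_total (0:ℝ) (max b ((c + a) / 2)) with h2 | h2
    · rw [max_eq_right h2] at hkey
      rcases le_total b ((c + a) / 2) with h3 | h3
      · rw [max_eq_right h3] at hkey
        -- c ≤ σ (c+a)/2, a ≤ c + b
        nlinarith [mul_nonneg (sub_nonneg.mpr hg1') hb0]
      · rw [max_eq_left h3] at hkey
        -- c ≤ σ b
        nlinarith [mul_nonneg (sub_nonneg.mpr hg1') hb0]
    · have : max b ((c + a) / 2) = 0 := le_antisymm h2 (le_max_of_le_left hb0)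
      rw [this, max_self] at hkey
      have hc' : c ≤ 0 := by nlinarith
      have hb' : b ≤ 0 := le_trans (le_max_left _ _) (le_of_eq this)
      nlinarith [mul_nonneg (sub_nonneg.mpr hg1') hb0]
  · rw [max_eq_left h] at hkey
    -- c ≤ σ a, a ≤ c + b
    nlinarith [mul_nonneg (sub_nonneg.mpr hg1') hb0]
end
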